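/- Let D be a convex domain in ℝ^d, let x₀ ∈ D and R₀ > 0 be such that the closed ball cl(B(x₀, R₀)) ⊆ D, and let R ≥ R₀. Then the bounded convex domain D_R = D ∩ B(x₀, R) satisfies condition (B) with δ = R₀/2 and β = (1 + (2R/R₀)²)^{1/2}. -/

import Mathlib

open MeasureTheory ProbabilityTheory Set RealInnerProductSpace

noncomputable section

/-- `d`-dimensional Euclidean space. -/
abbrev Euc (d : ℕ) := EuclideanSpace ℝ (Fin d)

/-- The set `N_{x,r}` of inward unit normal vectors at `x` with radius `r`:
`{n : ‖n‖ = 1, B(x - r n, r) ∩ D = ∅}`. -/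
def normalSet {d : ℕ} (D : Set (Euc d)) (x : Euc d) (r : ℝ) : Set (Euc d) :=
  {n | ‖n‖ = 1 ∧ Metric.ball (x - r • n) r ∩ D = ∅}

/-- The set `N_x = ⋃_{r>0} N_{x,r}` of inward unit normal vectors at `x`. -/
def normalCone {d : ℕ} (D : Set (Euc d)) (x : Euc d) : Set (Euc d) :=
  ⋃ r > 0, normalSet D x r

/-- Condition (B) with constants `δ`, `β`. -/
def CondB {d : ℕ} (D : Set (Euc d)) (δ β : ℝ) : Prop :=
  ∀ x ∈ frontier D, ∃ l : Euc d, ‖l‖ = 1 ∧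
    ∀ y ∈ Metric.ball x δ ∩ frontier D, ∀ n ∈ normalCone D y, 1 / β ≤ ⟪l, n⟫

/-!
An inward normal `n` at a boundary point `y` of an open convex set `S` is the direction of a ball
touching `S` from outside at `y`, so `S` lies in the half-space `⟪n, · - y⟫ ≥ 0`. When `S` contains
`B(x₀, R₀)` this forces `⟪n, x₀ - y⟫ ≥ R₀`, hence `⟪n, x₀ - x⟫ ≥ R₀/2` for every boundary
point `y` within `R₀/2` of a boundary point `x`. Taking `l_x` to be the unit vector from `x`
towards `x₀`, and using `‖x₀ - x‖ ≤ R`, gives `⟪l_x, n⟫ ≥ R₀/(2R) ≥ 1/β`.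
-/

open Metric

section InnerProductSpace

variable {E : Type*} [NormedAddCommGroup E] [InnerProductSpace ℝ E]

theorem exists_norm_smul_add_smul_lt_of_inner_neg {n v : E} {r : ℝ} (hr : 0 < r) (hn : ‖n‖ = 1)
    (hv : ⟪n, v⟫ < 0) : ∃ t ∈ Ioc (0 : ℝ) 1, ‖t • v + r • n‖ < r := by
  set t := min 1 (-(r * ⟪n, v⟫) / (‖v‖ ^ 2 + 1))
  have hrv : 0 < -(r * ⟪n, v⟫) := by nlinarith
  have ht0 : 0 < t := lt_min one_pos (by positivity)
  have htv : t * (‖v‖ ^ 2 + 1) ≤ -(r * ⟪n, v⟫) :=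
    (le_div_iff₀ (by positivity)).1 (min_le_right _ _)
  refine ⟨t, ⟨ht0, min_le_left _ _⟩, ?_⟩
  have hsq : ‖t • v + r • n‖ ^ 2 = t ^ 2 * ‖v‖ ^ 2 + 2 * t * r * ⟪n, v⟫ + r ^ 2 := by
    rw [norm_add_sq_real, norm_smul, norm_smul, real_inner_smul_left, real_inner_smul_right,
      real_inner_comm, Real.norm_of_nonneg ht0.le, Real.norm_of_nonneg hr.le, hn]
    ring
  refine lt_of_pow_lt_pow_left₀ 2 hr.le ?_
  rw [hsq]
  nlinarith [mul_le_mul_of_nonneg_left htv ht0.le, mul_pos ht0 hrv]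

theorem Convex.inner_sub_nonneg_of_ball_inter_eq_empty {S : Set E} (hS : Convex ℝ S)
    {y n z : E} {r : ℝ} (hr : 0 < r) (hn : ‖n‖ = 1) (hy : y ∈ closure S)
    (hdisj : ball (y - r • n) r ∩ S = ∅) (hz : z ∈ interior S) : 0 ≤ ⟪n, z - y⟫ := by
  by_contra! hneg
  obtain ⟨t, ⟨ht0, ht1⟩, hlt⟩ := exists_norm_smul_add_smul_lt_of_inner_neg hr hn hneg
  have hmem : (1 - t) • y + t • z ∈ S :=
    interior_subset (hS.combo_closure_interior_mem_interior hy hz (by linarith) ht0 (by ring))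
  have hball : (1 - t) • y + t • z ∈ ball (y - r • n) r := by
    rwa [mem_ball, dist_eq_norm,
      show (1 - t) • y + t • z - (y - r • n) = t • (z - y) + r • n by module]
  exact (eq_empty_iff_forall_notMem.1 hdisj) _ ⟨hball, hmem⟩

theorem le_inner_sub_of_ball_subset_halfspace {x₀ y n : E} {ρ : ℝ} (hρ : 0 < ρ) (hn : ‖n‖ = 1)
    (h : ball x₀ ρ ⊆ {z | 0 ≤ ⟪n, z - y⟫}) : ρ ≤ ⟪n, x₀ - y⟫ := by
  have hclosed : IsClosed {z | 0 ≤ ⟪n, z - y⟫} := isClosed_le continuous_const (by fun_prop)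
  have hmem : x₀ - ρ • n ∈ closedBall x₀ ρ := by
    rw [mem_closedBall, dist_eq_norm, sub_sub_cancel_left, norm_neg, norm_smul, hn, mul_one,
      Real.norm_of_nonneg hρ.le]
  rw [← closure_ball x₀ hρ.ne'] at hmem
  have h' : 0 ≤ ⟪n, x₀ - ρ • n - y⟫ := closure_minimal h hclosed hmem
  rwa [sub_right_comm, inner_sub_right, real_inner_smul_right, real_inner_self_eq_norm_sq, hn,
    one_pow, mul_one, sub_nonneg] at h'

end InnerProductSpace

theorem mem_normalCone {d : ℕ} {S : Set (Euc d)} {y n : Euc d} :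
    n ∈ normalCone S y ↔ ‖n‖ = 1 ∧ ∃ r > 0, ball (y - r • n) r ∩ S = ∅ := by
  simp only [normalCone, normalSet, mem_iUnion, exists_prop]
  exact ⟨fun ⟨r, hr, hn, h⟩ => ⟨hn, r, hr, h⟩, fun ⟨hn, r, hr, h⟩ => ⟨r, hr, hn, h⟩⟩

theorem CondB.mono {d : ℕ} {S : Set (Euc d)} {δ β β' : ℝ} (hB : CondB S δ β) (hβ : 0 < β)
    (hββ' : β ≤ β') : CondB S δ β' := by
  intro x hx
  obtain ⟨l, hl, hln⟩ := hB x hx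
  exact ⟨l, hl, fun y hy n hn => (one_div_le_one_div_of_le hβ hββ').trans (hln y hy n hn)⟩

theorem condB_of_ball_subset_of_subset_closedBall {d : ℕ} {S : Set (Euc d)} (hSo : IsOpen S)
    (hSc : Convex ℝ S) {x₀ : Euc d} {ρ R : ℝ} (hρ : 0 < ρ) (hin : ball x₀ ρ ⊆ S)
    (hout : S ⊆ closedBall x₀ R) : CondB S (ρ / 2) (2 * R / ρ) := by
  intro x hx
  have hxS : x ∉ S := (hSo.frontier_eq ▸ hx).2
  have hne : x₀ - x ≠ 0 := sub_ne_zero.2 fun h => hxS (h ▸ hin (mem_ball_self hρ))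
  have hpos : 0 < ‖x₀ - x‖ := norm_pos_iff.2 hne
  have hxR : ‖x₀ - x‖ ≤ R := by
    simpa [dist_eq_norm'] using
      closure_minimal hout isClosed_closedBall (frontier_subset_closure hx)
  refine ⟨‖x₀ - x‖⁻¹ • (x₀ - x), norm_smul_inv_norm hne, ?_⟩
  rintro y ⟨hyx, hyS⟩ n hn
  obtain ⟨hn1, r, hr, hdisj⟩ := mem_normalCone.1 hn
  have hx₀y : ρ ≤ ⟪n, x₀ - y⟫ :=
    le_inner_sub_of_ball_subset_halfspace hρ hn1 fun z hz =>
      hSc.inner_sub_nonneg_of_ball_inter_eq_empty hr hn1 (frontier_subset_closure hyS) hdisj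
        (hSo.interior_eq.symm ▸ hin hz)
  have hyx' : -(ρ / 2) ≤ ⟪n, y - x⟫ := by
    refine neg_le_of_abs_le ((abs_real_inner_le_norm n (y - x)).trans ?_)
    rw [hn1, one_mul, ← dist_eq_norm]
    exact (mem_ball.1 hyx).le
  have hx₀x_inner : ρ / 2 ≤ ⟪n, x₀ - x⟫ := by
    rw [← sub_add_sub_cancel x₀ y x, inner_add_right]
    linarith
  calc 1 / (2 * R / ρ) = R⁻¹ * (ρ / 2) := by rw [one_div_div]; ring
    _ ≤ ‖x₀ - x‖⁻¹ * ⟪n, x₀ - x⟫ := by gcongr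
    _ = ⟪‖x₀ - x‖⁻¹ • (x₀ - x), n⟫ := by rw [real_inner_smul_left, real_inner_comm]

theorem stmt4_general {d : ℕ} (D : Set (Euc d)) (hDopen : IsOpen D)
    (hDconv : Convex ℝ D) (x₀ : Euc d) (R₀ R : ℝ) (hR₀ : 0 < R₀)
    (hball : Metric.closedBall x₀ R₀ ⊆ D) (hR : R₀ ≤ R) :
    CondB (D ∩ Metric.ball x₀ R) (R₀ / 2) (Real.sqrt (1 + (2 * R / R₀) ^ 2)) := by
  have hβ : 0 < 2 * R / R₀ := by have := hR₀.trans_le hR; positivity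
  have hin : ball x₀ R₀ ⊆ D ∩ ball x₀ R :=
    subset_inter (ball_subset_closedBall.trans hball) (ball_subset_ball hR)
  refine (condB_of_ball_subset_of_subset_closedBall (hDopen.inter isOpen_ball)
    (hDconv.inter (convex_ball x₀ R)) hR₀ hin
    (inter_subset_right.trans ball_subset_closedBall)).mono hβ ?_
  exact (Real.le_sqrt' hβ).2 (le_add_of_nonneg_left zero_le_one)

/-- if `D` is a convex domain, `cl(B(x₀,R₀)) ⊆ D` with `R₀ > 0` and `R ≥ R₀`,
then the bounded convex domain `D_R = D ∩ B(x₀,R)` satisfies condition (B) with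
`δ = R₀/2` and `β = (1 + (2R/R₀)²)^{1/2}`. -/
theorem stmt4 {d : ℕ} (D : Set (Euc d)) (hDopen : IsOpen D) (hDne : D.Nonempty)
    (hDconv : Convex ℝ D) (x₀ : Euc d) (hx₀ : x₀ ∈ D) (R₀ R : ℝ) (hR₀ : 0 < R₀)
    (hball : Metric.closedBall x₀ R₀ ⊆ D) (hR : R₀ ≤ R) :
    CondB (D ∩ Metric.ball x₀ R) (R₀ / 2) (Real.sqrt (1 + (2 * R / R₀) ^ 2)) :=
  stmt4_general D hDopen hDconv x₀ R₀ R hR₀ hball hR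

end
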